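/- arXiv:1506.04999 — 2 statements merged into one kernel-verified Lean document; each statement's English description precedes it below -/
import Mathlib

section
/- (Gentle operator lemma, deterministic version) Let ρ be a positive semidefinite operator with Tr[ρ] ≤ 1 and E an operator with 0 ≤ E ≤ 1. If Tr[Eρ] ≥ 1 − ε for some 0 < ε ≤ 1, then (1/2)‖ρ − √E ρ √E‖₁ ≤ √ε. -/
/-!
Write `P = √E` and `Q = 1 - P`, so that `ρ - PρP = Qρ + PρQ`. For the Hermitian matrix
`Δ = ρ - PρP` the sign matrix `W` of `Δ` is unitary with `‖Δ‖₁ = Re tr(WΔ)`. Cauchy–Schwarz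
for the semi-inner product `⟪X, Y⟫ = tr(Y ρ Xᴴ)` bounds both `Re tr(WQρ)` and `Re tr(WPρQ)` by
`√tr(QρQ)`, times `√tr ρ ≤ 1` and `√tr(Eρ) ≤ 1` respectively. Finally `0 ≤ E ≤ 1` gives
`E ≤ √E`, i.e. `Q² ≤ 1 - E`, whence `tr(QρQ) ≤ tr ρ - tr(Eρ) ≤ ε`.
-/

open Matrix ComplexOrder BigOperators Finset

/-- The positive square root of a positive semidefinite matrix (removed from Mathlib;
restored with its former definition). -/
noncomputable def Matrix.PosSemidef.sqrt {n : Type*} [Fintype n] [DecidableEq n] {𝕜 : Type*}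
    [RCLike 𝕜] {A : Matrix n n 𝕜} (hA : A.PosSemidef) : Matrix n n 𝕜 :=
  hA.1.eigenvectorUnitary.1 * diagonal ((↑) ∘ (√·) ∘ hA.1.eigenvalues) *
    (star hA.1.eigenvectorUnitary : Matrix n n 𝕜)

noncomputable def traceNorm {d : Type*} [Fintype d] [DecidableEq d] (A : Matrix d d ℂ) : ℝ :=
  ((Matrix.posSemidef_conjTranspose_mul_self A).sqrt.trace).re

noncomputable def traceDist {d : Type*} [Fintype d] [DecidableEq d] (A B : Matrix d d ℂ) : ℝ :=
  traceNorm (A - B) / 2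

open scoped MatrixOrder

section CFC

variable {A : Type*} [Ring A] [StarRing A] [TopologicalSpace A] [Algebra ℝ A]
  [ContinuousFunctionalCalculus ℝ A IsSelfAdjoint] [PartialOrder A] [StarOrderedRing A]
  [NonnegSpectrumClass ℝ A] [IsTopologicalRing A] [T2Space A]

theorem CFC.one_sub_sqrt_mul_self_le {a : A} (h0 : 0 ≤ a) (h1 : a ≤ 1) :
    (1 - CFC.sqrt a) * (1 - CFC.sqrt a) ≤ 1 - a := by
  have ha : IsSelfAdjoint a := h0.isSelfAdjoint
  calc (1 - CFC.sqrt a) * (1 - CFC.sqrt a)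
      = cfc (fun x => (1 - √x) * (1 - √x)) a := by
        rw [cfc_mul (fun x => 1 - √x) (fun x => 1 - √x) a, cfc_sub (fun _ => 1) Real.sqrt a,
          cfc_const_one ℝ a, CFC.sqrt_eq_real_sqrt a, cfcₙ_eq_cfc]
    _ ≤ cfc (fun x => 1 - x) a := cfc_mono fun x hx => by
        have hx0 : 0 ≤ x := spectrum_nonneg_of_nonneg h0 hx
        have hx1 : √x ≤ 1 := Real.sqrt_le_one.mpr ((CFC.le_one_iff a).mp h1 x hx)
        nlinarith [Real.mul_self_sqrt hx0, mul_nonneg (Real.sqrt_nonneg x) (sub_nonneg.2 hx1)]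
    _ = 1 - a := by rw [cfc_sub (fun _ => 1) (fun x => x) a, cfc_const_one ℝ a, cfc_id' ℝ a]

end CFC

namespace Matrix.PosSemidef

variable {n 𝕜 : Type*} [Fintype n] [RCLike 𝕜]

theorem re_trace_mul_mul_conjTranspose_le {M : Matrix n n 𝕜} (hM : M.PosSemidef)
    (X Y : Matrix n n 𝕜) :
    RCLike.re (Y * M * Xᴴ).trace ≤
      √(RCLike.re (X * M * Xᴴ).trace) * √(RCLike.re (Y * M * Yᴴ).trace) := by
  let := M.toMatrixSeminormedAddCommGroup hM
  let := M.toMatrixInnerProductSpace hM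
  exact re_inner_le_norm (𝕜 := 𝕜) X Y

variable [DecidableEq n]

theorem sqrt_eq_cfcSqrt {A : Matrix n n 𝕜} (hA : A.PosSemidef) : hA.sqrt = CFC.sqrt A := by
  have hA' : 0 ≤ A := hA.nonneg
  rw [CFC.sqrt_eq_real_sqrt A, cfcₙ_eq_cfc, hA.1.cfc_eq, IsHermitian.cfc,
    Unitary.conjStarAlgAut_apply]
  rfl

theorem re_trace_mul_nonneg {A B : Matrix n n 𝕜} (hA : A.PosSemidef) (hB : B.PosSemidef) :
    0 ≤ RCLike.re (A * B).trace := by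
  have hA' : 0 ≤ A := hA.nonneg
  have h := (hB.mul_mul_conjTranspose_same (CFC.sqrt A)).trace_nonneg
  rw [← star_eq_conjTranspose, (CFC.sqrt_nonneg A).star_eq, trace_mul_cycle,
    CFC.sqrt_mul_sqrt_self A] at h
  exact (RCLike.nonneg_iff.mp h).1

theorem re_trace_unitary_mul_sub_conj_le {ρ W P : Matrix n n 𝕜} (hρ : ρ.PosSemidef)
    (hW : W ∈ unitary (Matrix n n 𝕜)) (hP : P.IsHermitian) :
    RCLike.re (W * (ρ - P * ρ * P)).trace ≤
      √(RCLike.re ((1 - P) * ρ * (1 - P)).trace) *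
        (√(RCLike.re ρ.trace) + √(RCLike.re (P * ρ * P).trace)) := by
  set Q := 1 - P with hQdef
  have hQ : Qᴴ = Q := by rw [hQdef, conjTranspose_sub, conjTranspose_one, hP.eq]
  have hWW : W * Wᴴ = 1 := Unitary.mul_star_self_of_mem hW
  have hsplit : (W * (ρ - P * ρ * P)).trace = (Q * ρ * W).trace + (P * ρ * (Q * W)).trace := by
    rw [trace_mul_comm W, ← trace_add, hQdef]
    noncomm_ring
  have hfirst := hρ.re_trace_mul_mul_conjTranspose_le Wᴴ Q
  have hsecond := hρ.re_trace_mul_mul_conjTranspose_le (Wᴴ * Q) P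
  simp only [conjTranspose_conjTranspose, conjTranspose_mul, hQ, hP.eq] at hfirst hsecond
  have hWρW : (Wᴴ * ρ * W).trace = ρ.trace := by
    rw [trace_mul_cycle, hWW, one_mul]
  have hWQρQW : (Wᴴ * Q * ρ * (Q * W)).trace = (Q * ρ * Q).trace := by
    rw [← mul_assoc, trace_mul_comm, ← mul_assoc, ← mul_assoc, ← mul_assoc, hWW, one_mul]
  rw [hWρW] at hfirst
  rw [hWQρQW] at hsecond
  rw [hsplit, map_add]
  nlinarith

theorem re_trace_conj_one_sub_sqrt_le {ρ E : Matrix n n 𝕜} (hρ : ρ.PosSemidef) (hE0 : 0 ≤ E)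
    (hE1 : E ≤ 1) :
    RCLike.re ((1 - CFC.sqrt E) * ρ * (1 - CFC.sqrt E)).trace ≤
      RCLike.re ρ.trace - RCLike.re (E * ρ).trace := by
  set Q := 1 - CFC.sqrt E
  have hgap : (1 - E - Q * Q).PosSemidef := CFC.one_sub_sqrt_mul_self_le hE0 hE1
  have h := re_trace_mul_nonneg hgap hρ
  rw [sub_mul, sub_mul, one_mul, trace_sub, trace_sub, map_sub, map_sub] at h
  rw [trace_mul_comm, ← mul_assoc]
  linarith

end Matrix.PosSemidef

theorem traceNorm_eq_re_trace_abs {d : Type*} [Fintype d] [DecidableEq d] (A : Matrix d d ℂ) :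
    traceNorm A = (CFC.abs A).trace.re := by
  rw [traceNorm, Matrix.PosSemidef.sqrt_eq_cfcSqrt, CFC.abs, star_eq_conjTranspose]

theorem Matrix.IsHermitian.exists_unitary_traceNorm_eq {d : Type*} [Fintype d] [DecidableEq d]
    {A : Matrix d d ℂ} (hA : A.IsHermitian) :
    ∃ W ∈ unitary (Matrix d d ℂ), traceNorm A = (W * A).trace.re := by
  -- `sign 0 = 1` keeps `cfc sign A` unitary when `A` is singular
  let sign : ℝ → ℝ := fun x => if x < 0 then -1 else 1
  have hcont : ContinuousOn sign (spectrum ℝ A) := A.finite_real_spectrum.continuousOn _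
  have hA' : IsSelfAdjoint A := hA
  refine ⟨cfc sign A, (cfc_unitary_iff sign A).2 fun x _ => ?_, ?_⟩
  · simp only [sign, star_trivial]
    split_ifs <;> norm_num
  · have hpolar : cfc sign A * A = CFC.abs A :=
      calc cfc sign A * A = cfc sign A * cfc (fun x => x) A := by rw [cfc_id' ℝ A]
        _ = cfc (fun x => sign x * x) A := (cfc_mul sign (fun x => x) A).symm
        _ = cfc (‖·‖) A := cfc_congr fun x _ => by
          simp only [sign, Real.norm_eq_abs]
          split_ifs with h
          · rw [abs_of_neg h]; ring
          · rw [abs_of_nonneg (not_lt.mp h)]; ring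
        _ = CFC.abs A := (CFC.abs_eq_cfc_norm A).symm
    rw [traceNorm_eq_re_trace_abs, hpolar]

theorem gentle_operator_general {d : Type*} [Fintype d] [DecidableEq d]
    (ρ E : Matrix d d ℂ)
    (hρ : ρ.PosSemidef) (hρtr : (ρ.trace).re ≤ 1)
    (hE : E.PosSemidef) (hE1 : ((1 : Matrix d d ℂ) - E).PosSemidef)
    (ε : ℝ)
    (h : ((E * ρ).trace).re ≥ 1 - ε) :
    traceNorm (ρ - hE.sqrt * ρ * hE.sqrt) / 2 ≤ Real.sqrt ε := by
  have hE0 : 0 ≤ E := hE.nonneg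
  have hgap := hρ.re_trace_conj_one_sub_sqrt_le hE0 hE1
  have hEρ := hE1.re_trace_mul_nonneg hρ
  have hPP : CFC.sqrt E * CFC.sqrt E = E := CFC.sqrt_mul_sqrt_self E
  have hP : (CFC.sqrt E).IsHermitian := (CFC.sqrt_nonneg E).isSelfAdjoint
  rw [hE.sqrt_eq_cfcSqrt]
  generalize CFC.sqrt E = P at hgap hPP hP ⊢
  obtain ⟨W, hW, hnorm⟩ :=
    (hρ.1.sub (hρ.mul_mul_conjTranspose_same P).1).exists_unitary_traceNorm_eq
  rw [hP.eq] at hnorm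
  have hbound := hρ.re_trace_unitary_mul_sub_conj_le hW hP
  have hPρP : (P * ρ * P).trace = (E * ρ).trace := by rw [trace_mul_comm, ← mul_assoc, hPP]
  rw [sub_mul, one_mul, trace_sub, map_sub] at hEρ
  simp only [RCLike.re_to_complex] at hbound hgap hEρ
  have ht : √((1 - P) * ρ * (1 - P)).trace.re ≤ √ε := Real.sqrt_le_sqrt (by linarith)
  have hr : √ρ.trace.re ≤ 1 := Real.sqrt_le_one.mpr hρtr
  have hp : √(P * ρ * P).trace.re ≤ 1 := Real.sqrt_le_one.mpr (by rw [hPρP]; linarith)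
  have := mul_le_mul ht (add_le_add hr hp)
    (add_nonneg (Real.sqrt_nonneg _) (Real.sqrt_nonneg _)) (Real.sqrt_nonneg ε)
  linarith

/-- Gentle operator lemma, deterministic version. -/
theorem gentle_operator {d : Type*} [Fintype d] [DecidableEq d]
    (ρ E : Matrix d d ℂ)
    (hρ : ρ.PosSemidef) (hρtr : (ρ.trace).re ≤ 1)
    (hE : E.PosSemidef) (hE1 : ((1 : Matrix d d ℂ) - E).PosSemidef)
    (ε : ℝ) (hε : 0 < ε) (hε1 : ε ≤ 1)
    (h : ((E * ρ).trace).re ≥ 1 - ε) :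
    traceNorm (ρ - hE.sqrt * ρ * hE.sqrt) / 2 ≤ Real.sqrt ε :=
  gentle_operator_general ρ E hρ hρtr hE hE1 ε h
end

section
/- (Exponential law of large numbers) Let X₁,…,X_n be i.i.d. random variables on a finite probability space with mean x̄ and nonzero variance. Then for every δ > 0 there exist constants c > 0 (depending on δ and the distribution but not on n) such that P(|(1/n)Σ X_i − x̄| ≥ δ) ≤ 2e^{−cn}. -/
/-!
Chernoff's method. If `E[X] < a`, the moment generating function `M(s) = E[exp (s (X - a))]`
equals `1` at `s = 0` and has derivative `E[X] - a < 0` there, so `M(s) < 1` for some `s > 0`.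
Markov's inequality applied to `exp (s ∑ᵢ (X_{f i} - a))`, whose expectation under the product
measure is `M(s)ⁿ`, bounds the upper tail by `M(s)ⁿ ≤ exp (-(1 - M(s)) n)`. The lower tail is the
upper tail of `-X`.
-/

open Finset

lemma exists_gt_lt_of_hasDerivAt_neg {f : ℝ → ℝ} {f' x : ℝ} (hf : HasDerivAt f f' x)
    (hf' : f' < 0) : ∃ y > x, f y < f x := by
  obtain ⟨y, hslope, hy⟩ :=
    ((hf.hasDerivWithinAt.liminf_right_slope_le hf').and_eventually self_mem_nhdsWithin).exists
  refine ⟨y, hy, ?_⟩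
  rw [slope_def_field, div_neg_iff] at hslope
  rcases hslope with ⟨-, hneg⟩ | ⟨hpos, -⟩ <;> linarith

lemma sum_filter_le_sum_filter_add_sum_filter {ι M : Type*} [AddCommMonoid M] [PartialOrder M]
    [IsOrderedAddMonoid M] (s : Finset ι) {P Q R : ι → Prop} [DecidablePred P]
    [DecidablePred Q] [DecidablePred R] {w : ι → M} (hw : ∀ i ∈ s, 0 ≤ w i)
    (h : ∀ i ∈ s, P i → Q i ∨ R i) :
    ∑ i ∈ s.filter P, w i ≤ ∑ i ∈ s.filter Q, w i + ∑ i ∈ s.filter R, w i := by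
  classical
  have hsub : s.filter P ⊆ s.filter Q ∪ s.filter R := by
    intro i
    simp only [mem_union, mem_filter]
    exact fun ⟨hi, hP⟩ => (h i hi hP).imp (⟨hi, ·⟩) (⟨hi, ·⟩)
  calc ∑ i ∈ s.filter P, w i ≤ ∑ i ∈ s.filter Q ∪ s.filter R, w i :=
        sum_le_sum_of_subset_of_nonneg hsub fun i hi _ => hw i (by aesop)
    _ ≤ ∑ i ∈ s.filter Q ∪ s.filter R, w i + ∑ i ∈ s.filter Q ∩ s.filter R, w i :=
        le_add_of_nonneg_right (sum_nonneg fun i hi => hw i (by aesop))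
    _ = _ := sum_union_inter

lemma le_or_le_neg_of_le_abs_one_div_mul_sub {n S μ δ : ℝ} (hn : 0 < n)
    (h : δ ≤ |(1 / n) * S - μ|) : n * (μ + δ) ≤ S ∨ n * (δ - μ) ≤ -S := by
  have hS : n * ((1 / n) * S) = S := by field_simp
  rcases le_abs'.mp h with h | h
  · exact Or.inr (by linarith [mul_le_mul_of_nonneg_left h hn.le])
  · exact Or.inl (by linarith [mul_le_mul_of_nonneg_left h hn.le])

section FiniteProbability

variable {Ω : Type*} [Fintype Ω] {p : Ω → ℝ}

lemma sum_filter_nonneg_prod_le_pow (hp0 : ∀ ω, 0 ≤ p ω) (Y : Ω → ℝ) (n : ℕ) :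
    ∑ f ∈ univ.filter (fun f : Fin n → Ω => 0 ≤ ∑ i, Y (f i)), ∏ i, p (f i)
      ≤ (∑ ω, p ω * Real.exp (Y ω)) ^ n := by
  rw [Fintype.sum_pow]
  calc ∑ f ∈ univ.filter (fun f : Fin n → Ω => 0 ≤ ∑ i, Y (f i)), ∏ i, p (f i)
      ≤ ∑ f ∈ univ.filter (fun f : Fin n → Ω => 0 ≤ ∑ i, Y (f i)),
          ∏ i, p (f i) * Real.exp (Y (f i)) := by
        refine sum_le_sum fun f hf => ?_
        rw [prod_mul_distrib, ← Real.exp_sum]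
        exact le_mul_of_one_le_right (prod_nonneg fun i _ => hp0 _)
          (Real.one_le_exp (mem_filter.mp hf).2)
    _ ≤ ∑ f : Fin n → Ω, ∏ i, p (f i) * Real.exp (Y (f i)) :=
        sum_le_sum_of_subset_of_nonneg (filter_subset _ _) fun f _ _ =>
          prod_nonneg fun i _ => mul_nonneg (hp0 _) (Real.exp_nonneg _)

lemma hasDerivAt_sum_mul_exp_mul (p Z : Ω → ℝ) :
    HasDerivAt (fun s => ∑ ω, p ω * Real.exp (s * Z ω)) (∑ ω, p ω * Z ω) 0 := by
  refine HasDerivAt.fun_sum fun ω _ => ?_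
  simpa using (((hasDerivAt_id (0 : ℝ)).mul_const (Z ω)).exp).const_mul (p ω)

lemma exists_pos_sum_mul_exp_mul_lt_one (hp1 : ∑ ω, p ω = 1) {Z : Ω → ℝ}
    (hZ : ∑ ω, p ω * Z ω < 0) : ∃ s > 0, ∑ ω, p ω * Real.exp (s * Z ω) < 1 := by
  simpa [hp1] using exists_gt_lt_of_hasDerivAt_neg (hasDerivAt_sum_mul_exp_mul p Z) hZ

theorem exists_pos_upper_tail_le_exp (hp0 : ∀ ω, 0 ≤ p ω) (hp1 : ∑ ω, p ω = 1)
    {X : Ω → ℝ} {a : ℝ} (ha : ∑ ω, p ω * X ω < a) :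
    ∃ c > 0, ∀ n : ℕ,
      ∑ f ∈ univ.filter (fun f : Fin n → Ω => n * a ≤ ∑ i, X (f i)), ∏ i, p (f i)
        ≤ Real.exp (-c * n) := by
  have hmean : ∑ ω, p ω * (X ω - a) < 0 := by
    simpa [mul_sub, sum_sub_distrib, ← sum_mul, hp1] using ha
  obtain ⟨s, hs, hM⟩ := exists_pos_sum_mul_exp_mul_lt_one hp1 hmean
  set M := ∑ ω, p ω * Real.exp (s * (X ω - a))
  have hM0 : 0 ≤ M := sum_nonneg fun ω _ => mul_nonneg (hp0 ω) (Real.exp_nonneg _)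
  refine ⟨1 - M, by linarith, fun n => ?_⟩
  have htail : univ.filter (fun f : Fin n → Ω => n * a ≤ ∑ i, X (f i))
      ⊆ univ.filter (fun f : Fin n → Ω => 0 ≤ ∑ i, s * (X (f i) - a)) := by
    intro f
    simp only [mem_filter, mem_univ, true_and, ← mul_sum, sum_sub_distrib, sum_const, card_univ,
      Fintype.card_fin, nsmul_eq_mul]
    exact fun hf => mul_nonneg hs.le (by linarith)
  calc _ ≤ ∑ f ∈ univ.filter (fun f : Fin n → Ω => 0 ≤ ∑ i, s * (X (f i) - a)),
          ∏ i, p (f i) :=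
        sum_le_sum_of_subset_of_nonneg htail fun f _ _ => prod_nonneg fun i _ => hp0 _
    _ ≤ M ^ n := sum_filter_nonneg_prod_le_pow hp0 (fun ω => s * (X ω - a)) n
    _ ≤ Real.exp (-(1 - M)) ^ n := by
        gcongr
        linarith [Real.add_one_le_exp (-(1 - M))]
    _ = Real.exp (-(1 - M) * n) := by rw [← Real.exp_nat_mul, mul_comm]

end FiniteProbability

theorem exponential_lln_general {Ω : Type*} [Fintype Ω]
    (p : Ω → ℝ) (hp0 : ∀ ω, 0 ≤ p ω) (hp1 : ∑ ω, p ω = 1) (X : Ω → ℝ) :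
    ∀ δ > (0 : ℝ), ∃ c > (0 : ℝ), ∀ n : ℕ, 1 ≤ n →
      ∑ f ∈ Finset.univ.filter
          (fun f : Fin n → Ω =>
            δ ≤ |(1 / (n : ℝ)) * ∑ i, X (f i) - ∑ ω', p ω' * X ω'|),
        ∏ i, p (f i) ≤ 2 * Real.exp (-c * n) := by
  intro δ hδ
  set μ := ∑ ω', p ω' * X ω'
  obtain ⟨c₁, hc₁, hupper⟩ :=
    exists_pos_upper_tail_le_exp (a := μ + δ) hp0 hp1 (by linarith)
  obtain ⟨c₂, hc₂, hlower⟩ := exists_pos_upper_tail_le_exp (X := fun ω => -X ω)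
    (a := δ - μ) hp0 hp1 (by simp only [mul_neg, sum_neg_distrib]; linarith)
  refine ⟨min c₁ c₂, lt_min hc₁ hc₂, fun n hn => ?_⟩
  have hexp {c : ℝ} (hc : min c₁ c₂ ≤ c) : Real.exp (-c * n) ≤ Real.exp (-min c₁ c₂ * n) := by
    gcongr
  calc _ ≤ ∑ f ∈ univ.filter (fun f : Fin n → Ω => n * (μ + δ) ≤ ∑ i, X (f i)), ∏ i, p (f i)
        + ∑ f ∈ univ.filter (fun f : Fin n → Ω => n * (δ - μ) ≤ ∑ i, -X (f i)), ∏ i, p (f i) := by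
        refine sum_filter_le_sum_filter_add_sum_filter _ (fun f _ => prod_nonneg fun i _ => hp0 _)
          fun f _ hf => ?_
        rw [sum_neg_distrib]
        exact le_or_le_neg_of_le_abs_one_div_mul_sub (by exact_mod_cast hn) hf
    _ ≤ Real.exp (-c₁ * n) + Real.exp (-c₂ * n) := add_le_add (hupper n) (hlower n)
    _ ≤ 2 * Real.exp (-min c₁ c₂ * n) := by
        linarith [hexp (min_le_left c₁ c₂), hexp (min_le_right c₁ c₂)]

/-- Exponential law of large numbers: for i.i.d. variables with nonzero variance,
the probability of deviating from the mean by at least δ decays exponentially in n. -/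
theorem exponential_lln {Ω : Type*} [Fintype Ω]
    (p : Ω → ℝ) (hp0 : ∀ ω, 0 ≤ p ω) (hp1 : ∑ ω, p ω = 1) (X : Ω → ℝ)
    (hvar : ∑ ω, p ω * (X ω - ∑ ω', p ω' * X ω') ^ 2 ≠ 0) :
    ∀ δ > (0 : ℝ), ∃ c > (0 : ℝ), ∀ n : ℕ, 1 ≤ n →
      ∑ f ∈ Finset.univ.filter
          (fun f : Fin n → Ω =>
            δ ≤ |(1 / (n : ℝ)) * ∑ i, X (f i) - ∑ ω', p ω' * X ω'|),
        ∏ i, p (f i) ≤ 2 * Real.exp (-c * n) :=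
  exponential_lln_general p hp0 hp1 X
end
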